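/- Let d = 1, let x_{i,n} ∈ ℝ be real-valued covariates, and let y_{1i,n} ∈ [a, b] be bounded outcomes. Let μ̂_{1,n} be the piecewise-linear solution of the isotonic regression problem min over nondecreasing functions μ : ℝ → [a, b] of (1/n_{1,n})∑_{i : Z_i = 1}(y_{1i,n} − μ(x_{i,n}))². Then the sequence {μ̂_{1,n}} is prediction unbiased, stable, and has typically simple realizations. -/

import Mathlib

open MeasureTheory ProbabilityTheory Filter Finset Real Set
open scoped ENNReal NNReal

noncomputable section

/-- Number of treated units in an assignment vector. -/
def ones {n : ℕ} (z : Fin n → Bool) : ℕ := (Finset.univ.filter fun i => z i = true).card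

/-- Completely randomized design: `Z n` is uniform over the assignment vectors in `{0,1}^n`
with exactly `n1 n` ones. -/
def IsCRD {Ω : Type} [MeasurableSpace Ω] (P : Measure Ω)
    (Z : (n : ℕ) → Ω → Fin n → Bool) (n1 : ℕ → ℕ) : Prop :=
  ∀ n, Measurable (Z n) ∧ P {ω | ones (Z n ω) = n1 n} = 1 ∧
    ∀ v w : Fin n → Bool, ones v = n1 n → ones w = n1 n →
      P {ω | Z n ω = v} = P {ω | Z n ω = w}

/-- Convergence to zero in probability for a sequence of (real-valued) random variables. -/
def TendstoInProb {Ω : Type} [MeasurableSpace Ω] (P : Measure Ω) (f : ℕ → Ω → ℝ) : Prop :=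
  ∀ ε : ℝ, 0 < ε → Tendsto (fun n => P {ω | ε ≤ |f n ω|}) atTop (nhds 0)

/-- Euclidean norm of a vector in `ℝ^d`. -/
def enorm2 {d : ℕ} (v : Fin d → ℝ) : ℝ := Real.sqrt (∑ j, (v j) ^ 2)

/-- Euclidean inner product on `ℝ^d`. -/
def dotp {d : ℕ} (θ v : Fin d → ℝ) : ℝ := ∑ j, θ j * v j

/-- The empirical `L²(Pₙ)` pseudo-distance `‖f - g‖ₙ` between two regression functions,
relative to the design points `x n 1, …, x n n`. -/
def distN {E : Type*} (x : (n : ℕ) → Fin n → E) (n : ℕ) (f g : E → ℝ) : ℝ :=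
  Real.sqrt ((n : ℝ)⁻¹ * ∑ i, (f (x n i) - g (x n i)) ^ 2)

/-- The `s`-covering number of a family `F` under a pseudo-distance `dst`. -/
def coveringNumber {α : Type*} (F : Set α) (dst : α → α → ℝ) (s : ℝ) : ℝ≥0∞ :=
  ⨅ (T : Finset α) (_ : ∀ f ∈ F, ∃ t ∈ T, dst f t ≤ s), (T.card : ℝ≥0∞)

/-- `√(log N)`, valued in `ℝ≥0∞` (it is `⊤` when the covering number is infinite). -/
def sqrtLog (N : ℝ≥0∞) : ℝ≥0∞ :=
  if N = ⊤ then ⊤ else ENNReal.ofReal (Real.sqrt (Real.log N.toReal))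

/-!
Unbiasedness: shifting the fit up (resp. down) by a small constant and clipping at `b` (resp. `a`)
keeps it nondecreasing with values in `[a, b]`; it moves every treated prediction except those
already at the bound, where the residual has a known sign, so optimality forces the treated
residuals to sum to zero.

Stability: compare the fit with the isotonic fit `μ*` on all units. The constraint set is convex,
so `μ*` is a projection and `‖μ̂ - μ*‖ₙ²` is at most the excess full-sample risk of `μ̂`. Since
`μ̂` beats `μ*` on the treated arm, that excess is controlled by the gap between treated-arm and
full-sample risks at `μ*` and at a point of a `δ`-net of the isotonic class. Nets built from
quantile buckets of the design and a grid of `≈ 1/δ` levels have a size independent of `n`, so a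
union bound and Chebyshev's inequality for sampling without replacement give the convergence.

Typically simple realizations: the fits always lie in the isotonic class, and the same nets give
`log N(s) ≲ s⁻¹ log s⁻¹ ≤ C s^(-3/2)`, whose square root is integrable on `(0, 1]`.
-/

open scoped BigOperators Topology

section LeastSquares

variable {ι E : Type*} {S : Finset ι} {x : ι → E} {y : ι → ℝ} {K : Set (E → ℝ)} {f g : E → ℝ}

theorem IsMinOn.sum_mul_sub_nonpos (hK : Convex ℝ K) (hf : f ∈ K) (hg : g ∈ K)
    (hmin : IsMinOn (fun h => ∑ i ∈ S, (y i - h (x i)) ^ 2) K f) :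
    ∑ i ∈ S, (y i - f (x i)) * (g (x i) - f (x i)) ≤ 0 := by
  set B := ∑ i ∈ S, (y i - f (x i)) * (g (x i) - f (x i))
  set A := ∑ i ∈ S, (g (x i) - f (x i)) ^ 2
  have hstep : ∀ t ∈ Ioc (0 : ℝ) 1, 2 * B ≤ t * A := by
    intro t ht
    have hle := isMinOn_iff.1 hmin _ (hK.add_smul_sub_mem hf hg ⟨ht.1.le, ht.2⟩)
    have hexp : ∑ i ∈ S, (y i - (f + t • (g - f)) (x i)) ^ 2
        = ∑ i ∈ S, (y i - f (x i)) ^ 2 - t * (2 * B) + t * (t * A) := by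
      simp only [B, A, mul_sum, ← sum_sub_distrib, ← sum_add_distrib]
      refine sum_congr rfl fun i _ => ?_
      simp only [Pi.add_apply, Pi.smul_apply, Pi.sub_apply, smul_eq_mul]
      ring
    simp only [hexp] at hle
    exact le_of_mul_le_mul_left (by linarith) ht.1
  have hlim : Tendsto (fun t : ℝ => t * A) (𝓝[>] 0) (𝓝 0) := by
    simpa using ((continuous_mul_const A).tendsto 0).mono_left nhdsWithin_le_nhds
  have : 2 * B ≤ 0 := ge_of_tendsto hlim <| by
    filter_upwards [Ioc_mem_nhdsGT (zero_lt_one' ℝ)] with t ht using hstep t ht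
  linarith

theorem IsMinOn.sum_sq_sub_le (hK : Convex ℝ K) (hf : f ∈ K) (hg : g ∈ K)
    (hmin : IsMinOn (fun h => ∑ i ∈ S, (y i - h (x i)) ^ 2) K f) :
    ∑ i ∈ S, (g (x i) - f (x i)) ^ 2
      ≤ ∑ i ∈ S, (y i - g (x i)) ^ 2 - ∑ i ∈ S, (y i - f (x i)) ^ 2 := by
  have hvar := hmin.sum_mul_sub_nonpos hK hf hg
  have hexp : ∑ i ∈ S, (y i - g (x i)) ^ 2 = ∑ i ∈ S, (y i - f (x i)) ^ 2
      - 2 * ∑ i ∈ S, (y i - f (x i)) * (g (x i) - f (x i)) + ∑ i ∈ S, (g (x i) - f (x i)) ^ 2 := by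
    simp only [mul_sum, ← sum_sub_distrib, ← sum_add_distrib]
    exact sum_congr rfl fun i _ => by ring
  linarith

end LeastSquares

theorem exists_pos_forall_le_of_pos {ι : Type*} (S : Finset ι) (c : ι → ℝ) :
    ∃ ε > 0, ∀ i ∈ S, 0 < c i → ε ≤ c i := by
  have hall : ∀ᶠ ε in 𝓝 (0 : ℝ), ∀ i ∈ S, 0 < c i → ε ≤ c i :=
    (eventually_all_finset S).2 fun i _ => by
      by_cases hc : 0 < c i
      · exact (eventually_le_nhds hc).mono fun _ h _ => h
      · exact Eventually.of_forall fun _ h => absurd h hc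
  obtain ⟨ε, hε, hpos⟩ := ((hall.filter_mono nhdsWithin_le_nhds).and
    (self_mem_nhdsWithin : Ioi (0 : ℝ) ∈ 𝓝[>] 0)).exists
  exact ⟨ε, hpos, hε⟩

def isotonicClass (a b : ℝ) : Set (ℝ → ℝ) := {f | Monotone f ∧ ∀ t, f t ∈ Icc a b}

namespace isotonicClass

variable {a b : ℝ}

theorem convex : Convex ℝ (isotonicClass a b) := by
  intro f hf g hg c d hc hd hcd
  refine ⟨fun s t hst => ?_, fun t => convex_Icc a b (hf.2 t) (hg.2 t) hc hd hcd⟩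
  simp only [Pi.add_apply, Pi.smul_apply, smul_eq_mul]
  gcongr
  exacts [hf.1 hst, hg.1 hst]

theorem isCompact : IsCompact (isotonicClass a b) := by
  have : isotonicClass a b = {f | Monotone f} ∩ Set.univ.pi fun _ => Icc a b := by
    ext f; simp only [isotonicClass, Set.mem_ofPred_eq, Set.mem_inter_iff, Set.mem_univ_pi]
  rw [this]
  exact (isCompact_univ_pi fun _ => isCompact_Icc).inter_left isClosed_monotone

theorem exists_isMinOn {ι : Type*} (hab : a ≤ b) (S : Finset ι) (x : ι → ℝ) (y : ι → ℝ) :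
    ∃ μ ∈ isotonicClass a b,
      IsMinOn (fun g => ∑ i ∈ S, (y i - g (x i)) ^ 2) (isotonicClass a b) μ :=
  isCompact.exists_isMinOn ⟨fun _ => a, monotone_const, fun _ => ⟨le_rfl, hab⟩⟩ <|
    (continuous_finsetSum _ fun i _ =>
      (continuous_const.sub (continuous_apply (x i))).pow 2).continuousOn

theorem sum_eq_of_isMinOn {ι : Type*} {S : Finset ι} {x y : ι → ℝ} {f : ℝ → ℝ}
    (hy : ∀ i ∈ S, y i ∈ Icc a b) (hf : f ∈ isotonicClass a b)
    (hmin : IsMinOn (fun g => ∑ i ∈ S, (y i - g (x i)) ^ 2) (isotonicClass a b) f) :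
    ∑ i ∈ S, f (x i) = ∑ i ∈ S, y i := by
  have hshift : ∀ g ∈ isotonicClass a b, ∀ c : ℝ,
      (∀ i ∈ S, c * (y i - f (x i)) ≤ (y i - f (x i)) * (g (x i) - f (x i))) →
      c * ∑ i ∈ S, (y i - f (x i)) ≤ 0 := fun g hg c hc => by
    rw [mul_sum]
    exact (sum_le_sum hc).trans (hmin.sum_mul_sub_nonpos convex hf hg)
  obtain ⟨ε, hε, hgap⟩ := exists_pos_forall_le_of_pos S fun i => b - f (x i)
  obtain ⟨ε', hε', hgap'⟩ := exists_pos_forall_le_of_pos S fun i => f (x i) - a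
  have hab : a ≤ b := (hf.2 0).1.trans (hf.2 0).2
  have hup := hshift (fun t => min (f t + ε) b)
    ⟨(hf.1.add_const ε).min monotone_const,
      fun t => ⟨le_min (by linarith [(hf.2 t).1]) hab, min_le_right _ _⟩⟩ ε fun i hi => by
    rcases (hf.2 (x i)).2.lt_or_eq with hlt | heq
    · rw [min_eq_left (by linarith [hgap i hi (sub_pos.2 hlt)])]
      exact (by ring : _ = _).le
    · rw [heq, min_eq_right (by linarith), sub_self, mul_zero]
      exact mul_nonpos_of_nonneg_of_nonpos hε.le (by linarith [(hy i hi).2])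
  have hdown := hshift (fun t => max (f t - ε') a)
    ⟨Monotone.max (fun s t hst => sub_le_sub_right (hf.1 hst) ε') monotone_const,
      fun t => ⟨le_max_right _ _, max_le (by linarith [(hf.2 t).2]) hab⟩⟩ (-ε') fun i hi => by
    rcases (hf.2 (x i)).1.lt_or_eq with hlt | heq
    · rw [max_eq_left (by linarith [hgap' i hi (sub_pos.2 hlt)])]
      exact (by ring : _ = _).le
    · rw [← heq, max_eq_right (by linarith), sub_self, mul_zero]
      exact mul_nonpos_of_nonpos_of_nonneg (by linarith) (by linarith [(hy i hi).1])
  have hzero : ∑ i ∈ S, (y i - f (x i)) = 0 := by nlinarith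
  rw [sum_sub_distrib] at hzero
  linarith

end isotonicClass

section Buckets

variable {n : ℕ} (x : Fin n → ℝ) (K : ℕ)

def designRank (t : ℝ) : ℕ := #{i | x i ≤ t}

/-- Index in `{0, …, K}` of the quantile bucket of `t`: the design is cut into `K + 1`
consecutive groups of about `n / (K + 1)` points each. -/
def bucket (t : ℝ) : ℕ := (K + 1) * designRank x t / (n + 1)

theorem designRank_mono : Monotone (designRank x) := fun _ _ hst =>
  card_le_card fun i => by simpa using fun hi => hi.trans hst

theorem designRank_le (t : ℝ) : designRank x t ≤ n :=
  (card_filter_le _ _).trans (by simp)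

theorem designRank_add_card {s t : ℝ} (hst : s ≤ t) :
    designRank x s + #{i | s < x i ∧ x i ≤ t} = designRank x t := by
  rw [designRank, designRank, ← card_filter_add_card_filter_not (s := {i | x i ≤ t}) (x · ≤ s)]
  congr 2 <;> ext i <;> simp only [mem_filter, not_le] <;> grind

theorem bucket_mono : Monotone (bucket x K) := fun _ _ hst =>
  Nat.div_le_div_right (Nat.mul_le_mul_left _ (designRank_mono x hst))

theorem bucket_le (t : ℝ) : bucket x K t ≤ K :=
  Nat.lt_succ_iff.1 <| (Nat.div_lt_iff_lt_mul n.succ_pos).2 <|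
    Nat.mul_lt_mul_of_pos_left (Nat.lt_succ_of_le (designRank_le x t)) K.succ_pos

theorem mul_card_Ioc_le {s t : ℝ} (hst : s ≤ t) (h : bucket x K s = bucket x K t) :
    (K + 1) * #{i | s < x i ∧ x i ≤ t} ≤ n := by
  have hs := Nat.div_mul_le_self ((K + 1) * designRank x s) (n + 1)
  have ht := Nat.lt_mul_div_succ ((K + 1) * designRank x t) (Nat.succ_pos n)
  simp only [bucket, Nat.succ_eq_add_one] at h ht
  rw [← h, ← designRank_add_card x hst, mul_add] at ht
  have : (n + 1) * ((K + 1) * designRank x s / (n + 1) + 1)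
      = (K + 1) * designRank x s / (n + 1) * (n + 1) + (n + 1) := by ring
  omega

end Buckets

section LowerValues

variable {n : ℕ} (x : Fin n → ℝ) (K : ℕ) {a b : ℝ} {f : ℝ → ℝ}

def pointsFrom (j : ℕ) : Finset (Fin n) := {i | j ≤ bucket x K (x i)}

/-- `b` when `pointsFrom x K j` is empty, which keeps `lowerVal` monotone in `j`. -/
def lowerVal (b : ℝ) (f : ℝ → ℝ) (j : ℕ) : ℝ :=
  if h : (pointsFrom x K j).Nonempty then (pointsFrom x K j).inf' h (f ∘ x) else b

variable {x K}

theorem mem_pointsFrom {j : ℕ} {i : Fin n} : i ∈ pointsFrom x K j ↔ j ≤ bucket x K (x i) := by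
  simp [pointsFrom]

theorem lowerVal_of_mem {j : ℕ} {i : Fin n} (hi : i ∈ pointsFrom x K j) :
    (∃ i₀ ∈ pointsFrom x K j, lowerVal x K b f j = f (x i₀)) ∧
      ∀ k ∈ pointsFrom x K j, lowerVal x K b f j ≤ f (x k) := by
  rw [lowerVal, dif_pos ⟨i, hi⟩]
  exact ⟨exists_mem_eq_inf' ⟨i, hi⟩ (f ∘ x), fun k hk => inf'_le (f ∘ x) hk⟩

theorem lowerVal_bucket_le (i : Fin n) : lowerVal x K b f (bucket x K (x i)) ≤ f (x i) :=
  (lowerVal_of_mem (mem_pointsFrom.2 le_rfl)).2 i (mem_pointsFrom.2 le_rfl)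

theorem le_lowerVal_bucket_succ (hf : f ∈ isotonicClass a b) (i : Fin n) :
    f (x i) ≤ lowerVal x K b f (bucket x K (x i) + 1) := by
  unfold lowerVal
  split_ifs with h
  · refine le_inf' h _ fun k hk => hf.1 (le_of_lt (lt_of_not_ge fun hki => ?_))
    exact (mem_pointsFrom.1 hk).not_gt (Nat.lt_succ_of_le (bucket_mono x K hki))
  · exact (hf.2 _).2

theorem lowerVal_mem (hf : f ∈ isotonicClass a b) (j : ℕ) : lowerVal x K b f j ∈ Icc a b := by
  unfold lowerVal
  split_ifs with h
  · obtain ⟨_, -, heq⟩ := exists_mem_eq_inf' h (f ∘ x)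
    exact heq ▸ hf.2 _
  · exact ⟨(hf.2 0).1.trans (hf.2 0).2, le_rfl⟩

theorem lowerVal_succ_self : lowerVal x K b f (K + 1) = b :=
  dif_neg fun ⟨_, hi⟩ => (mem_pointsFrom.1 hi).not_gt (Nat.lt_succ_of_le (bucket_le x K _))

theorem lowerVal_mono (hfb : ∀ t, f t ≤ b) : Monotone (lowerVal x K b f) := by
  intro j k hjk
  have hsub : pointsFrom x K k ⊆ pointsFrom x K j := fun i => by
    simpa only [mem_pointsFrom] using hjk.trans
  unfold lowerVal
  split_ifs with hj hk hk
  · exact inf'_mono _ hsub hk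
  · obtain ⟨i, hi⟩ := hj
    exact (inf'_le _ hi).trans (hfb _)
  · exact absurd (hk.mono hsub) hj
  · exact le_rfl

theorem mul_card_lt_lowerVal_le (hf : Monotone f) (j : ℕ) :
    (K + 1) * #{i | bucket x K (x i) = j ∧ lowerVal x K b f j < f (x i)} ≤ n := by
  set E : Finset (Fin n) := {i | bucket x K (x i) = j ∧ lowerVal x K b f j < f (x i)}
  rcases E.eq_empty_or_nonempty with hE | hE
  · simp [E, hE]
  obtain ⟨i₁, hi₁, hmax⟩ := E.exists_max_image x hE
  have hi₁E := (mem_filter.1 hi₁).2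
  obtain ⟨⟨i₀, hi₀, heq⟩, -⟩ := lowerVal_of_mem (b := b) (f := f) (mem_pointsFrom.2 hi₁E.1.ge)
  have hlt : ∀ i ∈ E, x i₀ < x i := fun i hi =>
    lt_of_not_ge fun h => (heq ▸ (mem_filter.1 hi).2.2).not_ge (hf h)
  have hbucket : bucket x K (x i₀) = bucket x K (x i₁) :=
    le_antisymm (bucket_mono x K (hlt i₁ hi₁).le) (hi₁E.1 ▸ mem_pointsFrom.1 hi₀)
  calc (K + 1) * #E ≤ (K + 1) * #{i | x i₀ < x i ∧ x i ≤ x i₁} :=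
        Nat.mul_le_mul_left _ <| card_le_card fun i hi =>
          mem_filter.2 ⟨mem_univ _, hlt i hi, hmax i hi⟩
    _ ≤ n := mul_card_Ioc_le x K (hlt i₁ hi₁).le hbucket

/-- Bucketing costs little: within bucket `j` a design point is either at the level
`lowerVal j` or is one of at most `n / (K + 1)` points lying below level `lowerVal (j + 1)`,
and these increments telescope to at most `b - a`. -/
theorem mul_sum_sub_lowerVal_le (hf : f ∈ isotonicClass a b) :
    (K + 1) * ∑ i, (f (x i) - lowerVal x K b f (bucket x K (x i))) ≤ n * (b - a) := by
  set v := lowerVal x K b f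
  have hfiber : ∀ j, (K + 1) * ∑ i with bucket x K (x i) = j, (f (x i) - v (bucket x K (x i)))
      ≤ n * (v (j + 1) - v j) := by
    intro j
    set E : Finset (Fin n) := {i | bucket x K (x i) = j ∧ v j < f (x i)}
    have hsum : ∑ i with bucket x K (x i) = j, (f (x i) - v (bucket x K (x i)))
        = ∑ i ∈ E, (f (x i) - v j) := by
      rw [← sum_filter_of_ne (p := fun i => v j < f (x i)) ?_, filter_filter]
      · exact sum_congr rfl fun i hi => by rw [(mem_filter.1 hi).2.1]
      intro i hi hne
      have hj : bucket x K (x i) = j := (mem_filter.1 hi).2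
      rw [hj] at hne
      exact lt_of_le_of_ne (hj ▸ lowerVal_bucket_le i) fun h => hne (by rw [h, sub_self])
    have hcard : ((K + 1) * #E : ℝ) ≤ n := by exact_mod_cast mul_card_lt_lowerVal_le hf.1 j
    calc (K + 1) * ∑ i with bucket x K (x i) = j, (f (x i) - v (bucket x K (x i)))
        ≤ (K + 1) * (#E • (v (j + 1) - v j)) := by
          rw [hsum]
          gcongr
          refine sum_le_card_nsmul _ _ _ fun i hi => ?_
          have hj := (mem_filter.1 hi).2.1
          exact sub_le_sub_right (hj ▸ le_lowerVal_bucket_succ hf i) _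
      _ ≤ n * (v (j + 1) - v j) := by
          rw [nsmul_eq_mul, ← mul_assoc]
          exact mul_le_mul_of_nonneg_right hcard
            (sub_nonneg.2 (lowerVal_mono (fun t => (hf.2 t).2) j.le_succ))
  calc (K + 1) * ∑ i, (f (x i) - v (bucket x K (x i)))
      = ∑ j ∈ range (K + 1), (K + 1) * ∑ i with bucket x K (x i) = j,
          (f (x i) - v (bucket x K (x i))) := by
        rw [← mul_sum, sum_fiberwise_of_maps_to fun i _ => mem_range.2 (Nat.lt_succ_of_le
          (bucket_le x K _))]
    _ ≤ ∑ j ∈ range (K + 1), n * (v (j + 1) - v j) := sum_le_sum fun j _ => hfiber j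
    _ ≤ n * (b - a) := by
        have htop : v (K + 1) = b := lowerVal_succ_self
        have hbot : a ≤ v 0 := (lowerVal_mem hf 0).1
        rw [← mul_sum, sum_range_sub, htop]
        exact mul_le_mul_of_nonneg_left (by linarith) n.cast_nonneg

end LowerValues

theorem card_filter_monotone_le (m k : ℕ) :
    #{u : Fin m → Fin (k + 1) | Monotone u} ≤ (m + 1) ^ (k + 1) := by
  let counts : (Fin m → Fin (k + 1)) → Fin (k + 1) → Fin (m + 1) := fun u l =>
    ⟨#{j | u j ≤ l}, Nat.lt_succ_of_le ((card_filter_le _ _).trans (by simp))⟩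
  calc #{u : Fin m → Fin (k + 1) | Monotone u}
      ≤ #(univ : Finset (Fin (k + 1) → Fin (m + 1))) := by
        refine card_le_card_of_injOn counts (fun _ _ => mem_coe.2 (mem_univ _)) ?_
        intro u hu u' hu' h
        have hu : Monotone u := (mem_filter.1 hu).2
        have hu' : Monotone u' := (mem_filter.1 hu').2
        have hle : ∀ j l, u j ≤ l ↔ u' j ≤ l := fun j l => by
          rw [← Tuple.lt_card_le_iff_apply_le_of_monotone hu,
            ← Tuple.lt_card_le_iff_apply_le_of_monotone hu']
          exact iff_of_eq (congrArg (fun c => (j : ℕ) < c) (congrArg Fin.val (congrFun h l)))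
        funext j
        exact le_antisymm ((hle j _).2 le_rfl) ((hle j _).1 le_rfl)
    _ = (m + 1) ^ (k + 1) := by simp

section Net

variable {n : ℕ} (x : Fin n → ℝ) (K : ℕ)

def netFun {G : ℕ} (a δ : ℝ) (u : Fin (K + 1) → Fin (G + 1)) (t : ℝ) : ℝ :=
  a + δ * (u ⟨bucket x K t, Nat.lt_succ_of_le (bucket_le x K t)⟩ : ℕ)

variable {x K} {a b : ℝ}

theorem netFun_mem (hab : a ≤ b) {δ : ℝ} (hδ : 0 < δ) {u : Fin (K + 1) → Fin (⌊(b - a) / δ⌋₊ + 1)}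
    (hu : Monotone u) : netFun x K a δ u ∈ isotonicClass a b := by
  refine ⟨fun s t hst => ?_, fun t => ⟨?_, ?_⟩⟩
  · unfold netFun
    gcongr
    exact hu (Fin.mk_le_mk.2 (bucket_mono x K hst))
  · exact le_add_of_nonneg_right (by positivity)
  · unfold netFun
    have hu_le : ∀ j, δ * ((u j : ℕ) : ℝ) ≤ b - a := fun j => by
      rw [← le_div_iff₀' hδ]
      exact (Nat.cast_le.2 (Nat.lt_succ_iff.1 (u j).2)).trans
        (Nat.floor_le (div_nonneg (sub_nonneg.2 hab) hδ.le))
    linarith [hu_le ⟨bucket x K t, Nat.lt_succ_of_le (bucket_le x K t)⟩]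

theorem exists_netFun_sum_sq_le {f : ℝ → ℝ} (hf : f ∈ isotonicClass a b) {δ : ℝ} (hδ : 0 < δ) :
    ∃ u : Fin (K + 1) → Fin (⌊(b - a) / δ⌋₊ + 1), Monotone u ∧
      ∑ i, (f (x i) - netFun x K a δ u (x i)) ^ 2
        ≤ n * (2 * (b - a) ^ 2 / (K + 1) + 2 * δ ^ 2) := by
  set v := lowerVal x K b f
  have hv : ∀ j, v j ∈ Icc a b := lowerVal_mem hf
  have hlevel : Monotone fun j => ⌊(v j - a) / δ⌋₊ := fun j k hjk =>
    Nat.floor_le_floor (by gcongr; exact lowerVal_mono (fun t => (hf.2 t).2) hjk)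
  let u : Fin (K + 1) → Fin (⌊(b - a) / δ⌋₊ + 1) := fun j =>
    ⟨⌊(v j - a) / δ⌋₊, Nat.lt_succ_of_le (Nat.floor_le_floor (by gcongr; exact (hv j).2))⟩
  refine ⟨u, fun j k hjk => Fin.mk_le_mk.2 (hlevel (Fin.le_def.1 hjk)), ?_⟩
  set D : Fin n → ℝ := fun i => f (x i) - v (bucket x K (x i))
  have hD : ∀ i, 0 ≤ D i ∧ D i ≤ b - a := fun i =>
    ⟨sub_nonneg.2 (lowerVal_bucket_le i), by linarith [(hf.2 (x i)).2, (hv (bucket x K (x i))).1]⟩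
  have hpoint : ∀ i, (f (x i) - netFun x K a δ u (x i)) ^ 2 ≤ 2 * (b - a) * D i + 2 * δ ^ 2 := by
    intro i
    set q := (v (bucket x K (x i)) - a) / δ
    have hq : 0 ≤ q := div_nonneg (sub_nonneg.2 (hv _).1) hδ.le
    have hδq : δ * q = v (bucket x K (x i)) - a := mul_div_cancel₀ _ hδ.ne'
    have hlo := mul_le_mul_of_nonneg_left (Nat.floor_le hq) hδ.le
    have hhi := mul_lt_mul_of_pos_left (Nat.lt_floor_add_one q) hδ
    set r := v (bucket x K (x i)) - (a + δ * ⌊q⌋₊)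
    have hr : 0 ≤ r ∧ r ≤ δ := ⟨by linarith, by linarith⟩
    have hnet : netFun x K a δ u (x i) = a + δ * ⌊q⌋₊ := rfl
    have hsplit : f (x i) - netFun x K a δ u (x i) = D i + r := by rw [hnet]; ring
    obtain ⟨hD0, hDb⟩ := hD i
    rw [hsplit]
    nlinarith [sq_nonneg (D i - r), mul_le_mul_of_nonneg_left hDb hD0,
      mul_le_mul hr.2 hr.2 hr.1 hδ.le]
  have hsumD : (K + 1) * ∑ i, D i ≤ n * (b - a) := mul_sum_sub_lowerVal_le hf
  calc ∑ i, (f (x i) - netFun x K a δ u (x i)) ^ 2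
      ≤ ∑ i, (2 * (b - a) * D i + 2 * δ ^ 2) := sum_le_sum fun i _ => hpoint i
    _ = 2 * (b - a) * ∑ i, D i + n * (2 * δ ^ 2) := by
        rw [sum_add_distrib, ← mul_sum, sum_const, card_univ, Fintype.card_fin, nsmul_eq_mul]
    _ ≤ n * (2 * (b - a) ^ 2 / (K + 1) + 2 * δ ^ 2) := by
        have hK : (0 : ℝ) < K + 1 := by positivity
        have : 2 * (b - a) * ∑ i, D i ≤ n * (2 * (b - a) ^ 2 / (K + 1)) := by
          rw [mul_div_assoc', le_div_iff₀ hK]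
          have hab : 0 ≤ b - a := sub_nonneg.2 ((hf.2 0).1.trans (hf.2 0).2)
          nlinarith [mul_le_mul_of_nonneg_left hsumD hab]
        linarith

end Net

/-- Bounds the number of monotone maps from `⌈4 c² / s²⌉₊ + 1` buckets to `⌊2 c / s⌋₊ + 1`
levels, hence the size of the nets below, independently of the design. -/
def netCard (c s : ℝ) : ℕ := (⌈4 * c ^ 2 / s ^ 2⌉₊ + 2) ^ (⌊2 * c / s⌋₊ + 1)

theorem isotonicClass.exists_finset_expect_sq_le {n : ℕ} (x : Fin n → ℝ) {a b : ℝ} (hab : a ≤ b)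
    {s : ℝ} (hs : 0 < s) :
    ∃ T : Finset (ℝ → ℝ), ↑T ⊆ isotonicClass a b ∧ #T ≤ netCard (b - a) s ∧
      ∀ f ∈ isotonicClass a b, ∃ g ∈ T, 𝔼 i, (f (x i) - g (x i)) ^ 2 ≤ s ^ 2 := by
  classical
  set K := ⌈4 * (b - a) ^ 2 / s ^ 2⌉₊
  have hδ : 0 < s / 2 := half_pos hs
  have hG : ⌊(b - a) / (s / 2)⌋₊ = ⌊2 * (b - a) / s⌋₊ := by rw [div_div_eq_mul_div, mul_comm]
  refine ⟨({u | Monotone u} : Finset (Fin (K + 1) → Fin (⌊(b - a) / (s / 2)⌋₊ + 1))).image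
    (netFun x K a (s / 2)), ?_, ?_, ?_⟩
  · intro g hg
    obtain ⟨u, hu, rfl⟩ := mem_image.1 (mem_coe.1 hg)
    exact netFun_mem hab hδ (mem_filter.1 hu).2
  · refine card_image_le.trans ((card_filter_monotone_le _ _).trans (le_of_eq ?_))
    rw [netCard, hG]
  · intro f hf
    obtain ⟨u, hu, hsum⟩ := exists_netFun_sum_sq_le (x := x) (K := K) hf hδ
    refine ⟨_, mem_image_of_mem _ (mem_filter.2 ⟨mem_univ _, hu⟩), ?_⟩
    have hK : 4 * (b - a) ^ 2 ≤ (K + 1) * s ^ 2 := by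
      have := (div_le_iff₀ (by positivity)).1 (Nat.le_ceil (4 * (b - a) ^ 2 / s ^ 2))
      nlinarith
    have hbucket : 2 * (b - a) ^ 2 / (K + 1) ≤ s ^ 2 / 2 := by
      rw [div_le_iff₀ (by positivity)]
      linarith
    rw [expect_eq_sum_div_card, card_univ, Fintype.card_fin]
    refine div_le_of_le_mul₀ n.cast_nonneg (sq_nonneg s) (hsum.trans ?_)
    rw [mul_comm]
    gcongr
    linarith

theorem distN_eq_sqrt_expect {E : Type*} (x : (n : ℕ) → Fin n → E) (n : ℕ) (f g : E → ℝ) :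
    distN x n f g = √(𝔼 i, (f (x n i) - g (x n i)) ^ 2) := by
  rw [distN, expect_eq_sum_div_card, card_univ, Fintype.card_fin, inv_mul_eq_div]

theorem coveringNumber_isotonicClass_le (x : (n : ℕ) → Fin n → ℝ) (n : ℕ) {a b : ℝ} (hab : a ≤ b)
    {s : ℝ} (hs : 0 < s) :
    coveringNumber (isotonicClass a b) (distN x n) s ≤ netCard (b - a) s := by
  obtain ⟨T, -, hT, hcover⟩ := isotonicClass.exists_finset_expect_sq_le (x n) hab hs
  refine (iInf₂_le T fun f hf => ?_).trans (Nat.cast_le.2 hT)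
  obtain ⟨g, hg, hfg⟩ := hcover f hf
  exact ⟨g, hg, by rw [distN_eq_sqrt_expect]; exact (Real.sqrt_le_left hs.le).2 hfg⟩

/-- The entropy of the isotonic class is of order `s⁻¹ log s⁻¹`; with `r = s ^ (-1/4)` we bound it
by a multiple of `r ^ 6 = s ^ (-3/2)`. -/
theorem log_netCard_le {c s : ℝ} (hc : 0 ≤ c) (hs : 0 < s) (hs1 : s ≤ 1) :
    Real.log (netCard c s) ≤ (2 * c + 1) * (4 * c ^ 2 + 11) * (s ^ (-(1 / 4) : ℝ)) ^ 6 := by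
  set r := s ^ (-(1 / 4) : ℝ)
  have hr1 : 1 ≤ r := Real.one_le_rpow_of_pos_of_le_one_of_nonpos hs hs1 (by norm_num)
  have hr4 : r ^ 4 = s⁻¹ := by
    rw [← Real.rpow_mul_natCast hs.le]
    norm_num [Real.rpow_neg_one]
  have hinv : 1 ≤ s⁻¹ := (one_le_inv₀ hs).2 hs1
  have hlevels : (⌊2 * c / s⌋₊ + 1 : ℝ) ≤ (2 * c + 1) * r ^ 4 := by
    have := Nat.floor_le (div_nonneg (by linarith) hs.le : 0 ≤ 2 * c / s)
    rw [hr4]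
    rw [div_eq_mul_inv] at this ⊢
    nlinarith
  have hbuckets : (⌈4 * c ^ 2 / s ^ 2⌉₊ + 2 : ℝ) ≤ (4 * c ^ 2 + 3) * r ^ 8 := by
    have := Nat.ceil_lt_add_one (by positivity : 0 ≤ 4 * c ^ 2 / s ^ 2)
    rw [show r ^ 8 = (s⁻¹) ^ 2 by rw [← hr4]; ring]
    rw [div_eq_mul_inv, ← inv_pow] at this ⊢
    nlinarith [one_le_pow₀ (n := 2) hinv]
  have hlog : Real.log (⌈4 * c ^ 2 / s ^ 2⌉₊ + 2 : ℝ) ≤ (4 * c ^ 2 + 11) * r ^ 2 := by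
    have h1 := Real.log_le_sub_one_of_pos (by positivity : (0 : ℝ) < 4 * c ^ 2 + 3)
    have h2 := Real.log_le_sub_one_of_pos (zero_lt_one.trans_le hr1)
    calc Real.log (⌈4 * c ^ 2 / s ^ 2⌉₊ + 2 : ℝ)
        ≤ Real.log ((4 * c ^ 2 + 3) * r ^ 8) := Real.log_le_log (by positivity) hbuckets
      _ = Real.log (4 * c ^ 2 + 3) + 8 * Real.log r := by
          rw [Real.log_mul (by positivity) (by positivity), Real.log_pow]
          push_cast
          ring
      _ ≤ (4 * c ^ 2 + 11) * r ^ 2 := by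
          have hr2 : 1 ≤ r ^ 2 := one_le_pow₀ hr1
          nlinarith [mul_le_mul_of_nonneg_left hr2 (by positivity : (0 : ℝ) ≤ 4 * c ^ 2 + 3)]
  rw [netCard, Nat.cast_pow, Real.log_pow]
  push_cast
  calc (⌊2 * c / s⌋₊ + 1 : ℝ) * Real.log (⌈4 * c ^ 2 / s ^ 2⌉₊ + 2)
      ≤ (2 * c + 1) * r ^ 4 * ((4 * c ^ 2 + 11) * r ^ 2) :=
        mul_le_mul hlevels hlog (Real.log_nonneg (by
          linarith [(⌈4 * c ^ 2 / s ^ 2⌉₊).cast_nonneg (α := ℝ)])) (by positivity)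
    _ = (2 * c + 1) * (4 * c ^ 2 + 11) * r ^ 6 := by ring

theorem sqrtLog_le_of_le_natCast {N : ℝ≥0∞} {m : ℕ} (h : N ≤ m) :
    sqrtLog N ≤ ENNReal.ofReal √(Real.log m) := by
  rw [sqrtLog, if_neg (ne_top_of_le_ne_top (ENNReal.natCast_ne_top m) h)]
  refine ENNReal.ofReal_le_ofReal (Real.sqrt_le_sqrt ?_)
  have hle : N.toReal ≤ m := by simpa using ENNReal.toReal_mono (ENNReal.natCast_ne_top m) h
  rcases ENNReal.toReal_nonneg.eq_or_lt with h0 | hpos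
  · rw [← h0, Real.log_zero]
    exact Real.log_natCast_nonneg m
  · exact Real.log_le_log hpos hle

theorem sqrtLog_coveringNumber_isotonicClass_le (x : (n : ℕ) → Fin n → ℝ) (n : ℕ) {a b : ℝ}
    (hab : a ≤ b) {s : ℝ} (hs : 0 < s) (hs1 : s ≤ 1) :
    sqrtLog (coveringNumber (isotonicClass a b) (distN x n) s)
      ≤ ENNReal.ofReal (√((2 * (b - a) + 1) * (4 * (b - a) ^ 2 + 11)) * s ^ (-(3 / 4) : ℝ)) := by
  refine (sqrtLog_le_of_le_natCast (coveringNumber_isotonicClass_le x n hab hs)).trans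
    (ENNReal.ofReal_le_ofReal ?_)
  have hC : 0 ≤ (2 * (b - a) + 1) * (4 * (b - a) ^ 2 + 11) := by
    have := sub_nonneg.2 hab
    positivity
  rw [Real.sqrt_le_left (by positivity), mul_pow, Real.sq_sqrt hC, ← Real.rpow_mul_natCast hs.le]
  convert log_netCard_le (sub_nonneg.2 hab) hs hs1 using 2
  rw [← Real.rpow_mul_natCast hs.le]
  norm_num

theorem lintegral_iSup_sqrtLog_coveringNumber_isotonicClass_ne_top (x : (n : ℕ) → Fin n → ℝ)
    {a b : ℝ} (hab : a ≤ b) :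
    ∫⁻ s in Ioc (0 : ℝ) 1, ⨆ n : ℕ, sqrtLog (coveringNumber (isotonicClass a b) (distN x n) s)
      ≠ ⊤ := by
  set C := √((2 * (b - a) + 1) * (4 * (b - a) ^ 2 + 11))
  have hint : IntegrableOn (fun s : ℝ => C * s ^ (-(3 / 4) : ℝ)) (Ioc 0 1) :=
    ((intervalIntegral.intervalIntegrable_rpow' (by norm_num)).1).const_mul C
  refine ne_top_of_le_ne_top (Integrable.lintegral_lt_top hint).ne <|
    setLIntegral_mono (by fun_prop) fun s hs => iSup_le fun n => ?_
  exact sqrtLog_coveringNumber_isotonicClass_le x n hab hs.1 hs.2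

section Sampling

variable {n k : ℕ}

def treated (v : Fin n → Bool) : Finset (Fin n) := {i | v i = true}

def assignments (n k : ℕ) : Finset (Fin n → Bool) := {v | ones v = k}

theorem card_treated (v : Fin n → Bool) : #(treated v) = ones v := rfl

theorem ones_comp_perm (v : Fin n → Bool) (σ : Equiv.Perm (Fin n)) : ones (v ∘ σ) = ones v :=
  card_nbij' σ σ.symm (fun i hi => by simpa using hi) (fun i hi => by simpa using hi)
    (fun i _ => by simp) (fun i _ => by simp)

theorem card_filter_assignments_comp_perm (σ : Equiv.Perm (Fin n))
    (p : (Fin n → Bool) → Prop) [DecidablePred p] :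
    #{v ∈ assignments n k | p (v ∘ σ)} = #{v ∈ assignments n k | p v} :=
  card_nbij' (· ∘ σ) (· ∘ σ.symm)
    (fun v hv => by simpa [assignments, ones_comp_perm] using hv)
    (fun v hv => by simpa [assignments, ones_comp_perm, Function.comp_assoc] using hv)
    (fun v _ => by ext; simp) (fun v _ => by ext; simp)

theorem Equiv.Perm.exists_apply_eq_and_apply_eq {α : Type*} [DecidableEq α] {i j i' j' : α}
    (hij : i ≠ j) (hij' : i' ≠ j') : ∃ σ : Equiv.Perm α, σ i = i' ∧ σ j = j' := by
  have hj : Equiv.swap i i' j ≠ i' := fun h =>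
    hij ((Equiv.swap i i').injective (h.trans (Equiv.swap_apply_left i i').symm)).symm
  refine ⟨(Equiv.swap i i').trans (Equiv.swap (Equiv.swap i i' j) j'), ?_, ?_⟩
  · simp only [Equiv.trans_apply, Equiv.swap_apply_left]
    exact Equiv.swap_apply_of_ne_of_ne hj.symm hij'
  · simp only [Equiv.trans_apply, Equiv.swap_apply_left]

theorem sum_sq_sum_treated (V : Finset (Fin n → Bool)) (c : Fin n → ℝ) :
    ∑ v ∈ V, (∑ i ∈ treated v, c i) ^ 2
      = ∑ i, ∑ j, (#{v ∈ V | v i = true ∧ v j = true} : ℝ) * (c i * c j) := by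
  simp only [sq, sum_mul_sum, treated, sum_filter]
  rw [sum_comm]
  refine sum_congr rfl fun i _ => ?_
  rw [sum_comm]
  refine sum_congr rfl fun j _ => ?_
  rw [card_filter, Nat.cast_sum, sum_mul]
  refine sum_congr rfl fun v _ => ?_
  by_cases hi : v i = true <;> by_cases hj : v j = true <;> simp [hi, hj]

theorem sum_card_filter_apply_assignments :
    ∑ i : Fin n, #{v ∈ assignments n k | v i = true} = k * #(assignments n k) := by
  have := sum_card_bipartiteAbove_eq_sum_card_bipartiteBelow (fun (i : Fin n) v => v i = true)
    (s := univ) (t := assignments n k)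
  simp only [bipartiteAbove, bipartiteBelow] at this
  rw [this, mul_comm, ← smul_eq_mul, ← sum_const]
  exact sum_congr rfl fun v hv => (mem_filter.1 hv).2

/-- The variance bound for sampling without replacement: by exchangeability the pair counts
`#{v | v i ∧ v j}` take one value on the diagonal and one off it, and for a centred `c` the
off-diagonal part of the quadratic form is `≤ 0`. -/
theorem mul_sum_sq_sum_treated_le {c : Fin n → ℝ} (hc : ∑ i, c i = 0) :
    n * ∑ v ∈ assignments n k, (∑ i ∈ treated v, c i) ^ 2
      ≤ k * #(assignments n k) * ∑ i, c i ^ 2 := by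
  set N : Fin n → Fin n → ℕ := fun i j => #{v ∈ assignments n k | v i = true ∧ v j = true}
  have hN : ∀ (σ : Equiv.Perm (Fin n)) i j, N (σ i) (σ j) = N i j := fun σ i j =>
    card_filter_assignments_comp_perm σ fun v => v i = true ∧ v j = true
  have hdiag : ∀ i j, N i i = N j j := fun i j => by
    simpa using (hN (Equiv.swap i j) i i).symm
  obtain ⟨N₂, hN₂⟩ : ∃ N₂, ∀ i j, i ≠ j → N i j = N₂ := by
    by_cases h : ∃ i₀ j₀ : Fin n, i₀ ≠ j₀
    · obtain ⟨i₀, j₀, h₀⟩ := h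
      refine ⟨N i₀ j₀, fun i j hij => ?_⟩
      obtain ⟨σ, rfl, rfl⟩ := Equiv.Perm.exists_apply_eq_and_apply_eq h₀ hij
      exact hN σ i₀ j₀
    · exact ⟨0, fun i j hij => absurd ⟨i, j, hij⟩ h⟩
  have hform : ∑ v ∈ assignments n k, (∑ i ∈ treated v, c i) ^ 2
      = ∑ i, ((N i i : ℝ) - N₂) * c i ^ 2 := by
    rw [sum_sq_sum_treated]
    have hsplit : ∀ i j, (N i j : ℝ) * (c i * c j)
        = N₂ * (c i * c j) + if i = j then ((N i i : ℝ) - N₂) * c i ^ 2 else 0 := fun i j => by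
      by_cases hij : i = j
      · subst hij; simp only [if_true]; ring
      · simp only [hij, if_false, hN₂ i j hij, add_zero]
    simp only [N] at hsplit
    simp only [hsplit, sum_add_distrib, sum_ite_eq, Finset.mem_univ, if_true, ← mul_sum, hc,
      mul_zero, zero_add]
    rfl
  have hcount : ∑ i, (N i i : ℝ) = k * #(assignments n k) := by
    simp only [N, and_self]
    exact_mod_cast sum_card_filter_apply_assignments
  calc n * ∑ v ∈ assignments n k, (∑ i ∈ treated v, c i) ^ 2
      = n * ∑ i, ((N i i : ℝ) - N₂) * c i ^ 2 := by rw [hform]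
    _ ≤ n * ∑ i, (N i i : ℝ) * c i ^ 2 := by
        gcongr with i
        exact sub_le_self _ (by positivity)
    _ = ∑ _j : Fin n, ∑ i, (N i i : ℝ) * c i ^ 2 := by simp
    _ = ∑ j, ∑ i, (N j j : ℝ) * c i ^ 2 :=
        sum_congr rfl fun j _ => sum_congr rfl fun i _ => by rw [hdiag i j]
    _ = k * #(assignments n k) * ∑ i, c i ^ 2 := by rw [← hcount, sum_mul]; simp only [mul_sum]

theorem card_filter_le_abs_expect_sub_mul_le (hn : 0 < n) (hk : 0 < k) {w : Fin n → ℝ} {A : ℝ}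
    (hw : ∀ i, w i ∈ Icc 0 A) {ε : ℝ} (hε : 0 < ε) :
    (#{v ∈ assignments n k | ε ≤ |𝔼 i ∈ treated v, w i - 𝔼 i, w i|} : ℝ) * ε ^ 2
      ≤ #(assignments n k) * A ^ 2 / k := by
  set W := 𝔼 i, w i
  set c : Fin n → ℝ := fun i => (w i - W) / k
  have hk' : (0 : ℝ) < k := by exact_mod_cast hk
  have hn' : (0 : ℝ) < n := by exact_mod_cast hn
  have hc : ∑ i, c i = 0 := by
    simp only [c, ← sum_div, sum_sub_distrib, sum_const, card_univ, Fintype.card_fin, nsmul_eq_mul,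
      W, expect_eq_sum_div_card, mul_div_cancel_left₀ _ hn'.ne', sub_self, zero_div]
  have hdev : ∀ v ∈ assignments n k, 𝔼 i ∈ treated v, w i - W = ∑ i ∈ treated v, c i := by
    intro v hv
    have hcard : (#(treated v) : ℝ) = k := by exact_mod_cast (mem_filter.1 hv).2
    simp only [c, ← sum_div, sum_sub_distrib, sum_const, nsmul_eq_mul, hcard,
      expect_eq_sum_div_card]
    field_simp
  have hc2 : ∑ i, c i ^ 2 ≤ n * (A / k) ^ 2 := by
    have hW : ∀ i, W ∈ Icc 0 A := fun i =>
      ⟨expect_nonneg fun j _ => (hw j).1, expect_le ⟨i, mem_univ _⟩ fun j _ => (hw j).2⟩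
    calc ∑ i, c i ^ 2 ≤ ∑ _i : Fin n, (A / k) ^ 2 := sum_le_sum fun i _ => by
          obtain ⟨hw₀, hwA⟩ := hw i
          obtain ⟨hW₀, hWA⟩ := hW i
          simp only [c, div_pow]
          exact div_le_div_of_nonneg_right (sq_le_sq' (by linarith) (by linarith)) (by positivity)
      _ = n * (A / k) ^ 2 := by simp
  set F := {v ∈ assignments n k | ε ≤ |𝔼 i ∈ treated v, w i - W|}
  calc (#F : ℝ) * ε ^ 2 = ∑ _v ∈ F, ε ^ 2 := by rw [sum_const, nsmul_eq_mul]
    _ ≤ ∑ v ∈ F, (∑ i ∈ treated v, c i) ^ 2 := sum_le_sum fun v hv => by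
        rw [← hdev v (filter_subset _ _ hv)]
        exact (pow_le_pow_left₀ hε.le (mem_filter.1 hv).2 2).trans_eq (sq_abs _)
    _ ≤ ∑ v ∈ assignments n k, (∑ i ∈ treated v, c i) ^ 2 :=
        sum_le_sum_of_subset_of_nonneg (filter_subset _ _) fun _ _ _ => sq_nonneg _
    _ ≤ k * #(assignments n k) * (∑ i, c i ^ 2) / n := by
        rw [le_div_iff₀ hn', mul_comm]
        exact mul_sum_sq_sum_treated_le hc
    _ ≤ k * #(assignments n k) * (n * (A / k) ^ 2) / n := by gcongr
    _ = #(assignments n k) * A ^ 2 / k := by field_simp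

end Sampling

section Risk

theorem abs_sq_sub_sq_le {a b y u v : ℝ} (hy : y ∈ Icc a b) (hu : u ∈ Icc a b)
    (hv : v ∈ Icc a b) : |(y - u) ^ 2 - (y - v) ^ 2| ≤ 2 * (b - a) * |u - v| := by
  rw [show (y - u) ^ 2 - (y - v) ^ 2 = (2 * y - u - v) * (v - u) by ring, abs_mul, abs_sub_comm v]
  exact mul_le_mul_of_nonneg_right
    (abs_le.2 ⟨by linarith [hy.1, hy.2, hu.1, hu.2, hv.1, hv.2],
      by linarith [hy.1, hy.2, hu.1, hu.2, hv.1, hv.2]⟩) (abs_nonneg _)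

theorem sq_sub_mem_Icc {a b y u : ℝ} (hy : y ∈ Icc a b) (hu : u ∈ Icc a b) :
    (y - u) ^ 2 ∈ Icc 0 ((b - a) ^ 2) :=
  ⟨sq_nonneg _, sq_le_sq' (by linarith [hy.1, hu.2]) (by linarith [hy.2, hu.1])⟩

theorem abs_expect_sq_sub_expect_sq_le {ι : Type*} (S : Finset ι) {a b : ℝ} {y u v : ι → ℝ}
    (hy : ∀ i, y i ∈ Icc a b) (hu : ∀ i, u i ∈ Icc a b) (hv : ∀ i, v i ∈ Icc a b) :
    |𝔼 i ∈ S, (y i - u i) ^ 2 - 𝔼 i ∈ S, (y i - v i) ^ 2| ≤ 2 * (b - a) * 𝔼 i ∈ S, |u i - v i| := by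
  rw [← expect_sub_distrib, mul_expect]
  exact (abs_expect_le _ _).trans
    (expect_le_expect fun i _ => abs_sq_sub_sq_le (hy i) (hu i) (hv i))

theorem expect_abs_le_sqrt_expect_sq {ι : Type*} (S : Finset ι) (d : ι → ℝ) :
    𝔼 i ∈ S, |d i| ≤ √(𝔼 i ∈ S, d i ^ 2) := by
  refine (le_abs_self _).trans (Real.abs_le_sqrt ?_)
  have hcs := expect_mul_sq_le_sq_mul_sq S (fun i => |d i|) fun _ => (1 : ℝ)
  have hone : 𝔼 _i ∈ S, (1 : ℝ) ^ 2 ≤ 1 := by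
    rcases S.eq_empty_or_nonempty with rfl | hS
    · simp
    · simp [expect_const hS]
  simp only [mul_one, sq_abs] at hcs
  exact hcs.trans (mul_le_of_le_one_right (expect_nonneg fun i _ => sq_nonneg _) hone)

theorem expect_le_card_div_mul_expect {n : ℕ} {S : Finset (Fin n)} (hS : S.Nonempty)
    {d : Fin n → ℝ} (hd : ∀ i, 0 ≤ d i) : 𝔼 i ∈ S, d i ≤ n / #S * 𝔼 i, d i := by
  have hn : (n : ℝ) ≠ 0 := by
    obtain ⟨i, -⟩ := hS
    exact Nat.cast_ne_zero.2 (Fin.pos i).ne'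
  rw [expect_eq_sum_div_card, expect_eq_sum_div_card, card_univ, Fintype.card_fin,
    div_mul_div_comm, mul_comm (n : ℝ), mul_div_mul_right _ _ hn]
  exact div_le_div_of_nonneg_right (sum_le_sum_of_subset_of_nonneg (subset_univ S)
    fun i _ _ => hd i) (Nat.cast_nonneg _)

theorem expect_sq_sub_le_of_isMinOn {n : ℕ} {x y : Fin n → ℝ} {a b : ℝ} (hy : ∀ i, y i ∈ Icc a b)
    {S : Finset (Fin n)} (hS : S.Nonempty) {f μ g : ℝ → ℝ} (hf : f ∈ isotonicClass a b)
    (hμ : μ ∈ isotonicClass a b) (hg : g ∈ isotonicClass a b)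
    (hf_min : IsMinOn (fun h => ∑ i ∈ S, (y i - h (x i)) ^ 2) (isotonicClass a b) f)
    (hμ_min : IsMinOn (fun h => ∑ i, (y i - h (x i)) ^ 2) (isotonicClass a b) μ)
    {δ : ℝ} (hδ : 0 ≤ δ) (hfg : 𝔼 i, (f (x i) - g (x i)) ^ 2 ≤ δ ^ 2) :
    𝔼 i, (f (x i) - μ (x i)) ^ 2
      ≤ |𝔼 i ∈ S, (y i - g (x i)) ^ 2 - 𝔼 i, (y i - g (x i)) ^ 2|
        + |𝔼 i ∈ S, (y i - μ (x i)) ^ 2 - 𝔼 i, (y i - μ (x i)) ^ 2|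
        + 2 * (b - a) * (1 + n / #S) * δ := by
  have hproj : 𝔼 i, (f (x i) - μ (x i)) ^ 2
      ≤ 𝔼 i, (y i - f (x i)) ^ 2 - 𝔼 i, (y i - μ (x i)) ^ 2 := by
    simp only [expect_eq_sum_div_card, ← sub_div]
    exact div_le_div_of_nonneg_right (hμ_min.sum_sq_sub_le isotonicClass.convex hμ hf)
      (Nat.cast_nonneg _)
  have hfit : 𝔼 i ∈ S, (y i - f (x i)) ^ 2 ≤ 𝔼 i ∈ S, (y i - μ (x i)) ^ 2 := by
    simp only [expect_eq_sum_div_card]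
    exact div_le_div_of_nonneg_right (isMinOn_iff.1 hf_min μ hμ) (Nat.cast_nonneg _)
  have hclose : 𝔼 i, |f (x i) - g (x i)| ≤ δ :=
    (expect_abs_le_sqrt_expect_sq _ _).trans ((Real.sqrt_le_left hδ).2 hfg)
  have hab : 0 ≤ b - a := sub_nonneg.2 ((hf.2 0).1.trans (hf.2 0).2)
  have hfull := abs_le.1 <| (abs_expect_sq_sub_expect_sq_le univ hy (fun i => hf.2 (x i))
    (fun i => hg.2 (x i))).trans (mul_le_mul_of_nonneg_left hclose (by positivity))
  have hsample := abs_le.1 <| (abs_expect_sq_sub_expect_sq_le S hy (fun i => hf.2 (x i))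
    (fun i => hg.2 (x i))).trans <| mul_le_mul_of_nonneg_left ((expect_le_card_div_mul_expect hS
      fun i => abs_nonneg _).trans (mul_le_mul_of_nonneg_left hclose (by positivity)))
      (by positivity)
  have hdev_g := neg_abs_le (𝔼 i ∈ S, (y i - g (x i)) ^ 2 - 𝔼 i, (y i - g (x i)) ^ 2)
  have hdev_μ := le_abs_self (𝔼 i ∈ S, (y i - μ (x i)) ^ 2 - 𝔼 i, (y i - μ (x i)) ^ 2)
  linarith

end Risk

section Design

variable {Ω : Type} [MeasurableSpace Ω] {P : Measure Ω} [IsProbabilityMeasure P]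
  {Z : (n : ℕ) → Ω → Fin n → Bool} {n1 : ℕ → ℕ}

theorem IsCRD.measure_eq_card_div (hCRD : IsCRD P Z n1) (n : ℕ) (Q : (Fin n → Bool) → Prop)
    [DecidablePred Q] :
    P {ω | Q (Z n ω)} = #{v ∈ assignments n (n1 n) | Q v} / #(assignments n (n1 n)) := by
  obtain ⟨hZ, hgood, hexch⟩ := hCRD n
  set V := assignments n (n1 n)
  set μ := P.map (Z n)
  have hμ : ∀ s, μ s = P (Z n ⁻¹' s) := fun s =>
    Measure.map_apply hZ (Set.toFinite s).measurableSet
  have hpre : Z n ⁻¹' V = {ω | ones (Z n ω) = n1 n} := by ext; simp [V, assignments]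
  have hV : μ V = 1 := by rw [hμ, hpre, hgood]
  have hVc : μ (↑V)ᶜ = 0 := by
    rw [hμ, Set.preimage_compl, hpre]
    exact (prob_compl_eq_zero_iff (hpre ▸ hZ (Set.toFinite _).measurableSet)).2 hgood
  obtain ⟨v₀, hv₀⟩ : V.Nonempty := Finset.nonempty_iff_ne_empty.2 fun h => by simp [h] at hV
  have hsub : ∀ s ⊆ V, μ s = #s * μ {v₀} := fun s hs => by
    rw [← sum_measure_singleton, ← nsmul_eq_mul, ← sum_const]
    refine sum_congr rfl fun v hv => ?_
    rw [hμ, hμ]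
    exact hexch v v₀ (mem_filter.1 (hs hv)).2 (mem_filter.1 hv₀).2
  have hp : μ {v₀} = (#V : ℝ≥0∞)⁻¹ :=
    ENNReal.eq_inv_of_mul_eq_one_left (by rw [mul_comm, ← hsub V subset_rfl, hV])
  calc P {ω | Q (Z n ω)} = μ ({v | Q v} ∩ V) := by rw [measure_inter_conull hVc, hμ]; rfl
    _ = μ ↑{v ∈ V | Q v} := by congr 1; ext; simp [and_comm]
    _ = #{v ∈ V | Q v} / #V := by rw [hsub _ (filter_subset _ _), hp, div_eq_mul_inv]

theorem IsCRD.measure_exists_le_abs_expect_sub_le (hCRD : IsCRD P Z n1) {n : ℕ} (hn : 0 < n)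
    (hn1 : 0 < n1 n) {α : Type*} (G : Finset α) (w : α → Fin n → ℝ) {A : ℝ}
    (hw : ∀ g ∈ G, ∀ i, w g i ∈ Icc 0 A) {ε : ℝ} (hε : 0 < ε) :
    P {ω | ones (Z n ω) = n1 n → ∃ g ∈ G, ε ≤ |𝔼 i ∈ treated (Z n ω), w g i - 𝔼 i, w g i|}
      ≤ ENNReal.ofReal (#G * A ^ 2 / (n1 n * ε ^ 2)) := by
  classical
  set Q : (Fin n → Bool) → Prop := fun v =>
    ones v = n1 n → ∃ g ∈ G, ε ≤ |𝔼 i ∈ treated v, w g i - 𝔼 i, w g i|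
  change P {ω | Q (Z n ω)} ≤ _
  rw [hCRD.measure_eq_card_div n Q]
  set V := assignments n (n1 n)
  set bad : α → Finset (Fin n → Bool) := fun g =>
    {v ∈ V | ε ≤ |𝔼 i ∈ treated v, w g i - 𝔼 i, w g i|}
  have hsub : {v ∈ V | Q v} ⊆ G.biUnion bad := fun v hv => by
    obtain ⟨hvV, hv⟩ := mem_filter.1 hv
    obtain ⟨g, hg, hdev⟩ := hv (mem_filter.1 hvV).2
    exact mem_biUnion.2 ⟨g, hg, mem_filter.2 ⟨hvV, hdev⟩⟩
  have hbad : ∀ g ∈ G, (#(bad g) : ℝ) ≤ A ^ 2 / (n1 n * ε ^ 2) * #V := fun g hg => by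
    have h : (#(bad g) : ℝ) * ε ^ 2 ≤ #V * A ^ 2 / n1 n :=
      card_filter_le_abs_expect_sub_mul_le hn hn1 (hw g hg) hε
    rw [le_div_iff₀ (by positivity)] at h
    rw [div_mul_eq_mul_div, le_div_iff₀ (by positivity)]
    linarith
  have hcard : (#{v ∈ V | Q v} : ℝ) ≤ #G * A ^ 2 / (n1 n * ε ^ 2) * #V :=
    calc _ ≤ (∑ g ∈ G, #(bad g) : ℝ) := by
          exact_mod_cast (Finset.card_le_card hsub).trans card_biUnion_le
      _ ≤ ∑ _g ∈ G, A ^ 2 / (n1 n * ε ^ 2) * #V := sum_le_sum hbad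
      _ = #G * A ^ 2 / (n1 n * ε ^ 2) * #V := by rw [sum_const, nsmul_eq_mul]; ring
  refine ENNReal.div_le_of_le_mul ?_
  rw [← ENNReal.ofReal_natCast, ← ENNReal.ofReal_natCast #V, ← ENNReal.ofReal_mul (by positivity)]
  exact ENNReal.ofReal_le_ofReal hcard

theorem IsCRD.measure_le_distN_isotonic_le (hCRD : IsCRD P Z n1) {n : ℕ} (hn : 0 < n)
    {pmin : ℝ} (hpmin : 0 < pmin) (hn1 : pmin * n ≤ n1 n) (x : (n : ℕ) → Fin n → ℝ)
    {y : Fin n → ℝ} {a b : ℝ} (hy : ∀ i, y i ∈ Icc a b) {μh : Ω → ℝ → ℝ}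
    (hμh : ∀ ω, μh ω ∈ isotonicClass a b)
    (hfit : ∀ ω, IsMinOn (fun g => ∑ i ∈ treated (Z n ω), (y i - g (x n i)) ^ 2)
      (isotonicClass a b) (μh ω))
    {μ : ℝ → ℝ} (hμ : μ ∈ isotonicClass a b)
    (hμ_min : IsMinOn (fun g => ∑ i, (y i - g (x n i)) ^ 2) (isotonicClass a b) μ)
    {T : Finset (ℝ → ℝ)} (hT : ↑T ⊆ isotonicClass a b) {δ : ℝ} (hδ : 0 ≤ δ)
    (hcover : ∀ f ∈ isotonicClass a b, ∃ g ∈ T, 𝔼 i, (f (x n i) - g (x n i)) ^ 2 ≤ δ ^ 2)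
    {ε : ℝ} (hε : 0 < ε) (hδε : 2 * (b - a) * (1 + pmin⁻¹) * δ ≤ ε ^ 2 / 4) :
    P {ω | ε ≤ |distN x n (μh ω) μ|}
      ≤ ENNReal.ofReal ((#T + 1) * ((b - a) ^ 2) ^ 2 / (pmin * n * (ε ^ 2 / 4) ^ 2)) := by
  classical
  have hnR : (0 : ℝ) < n := by exact_mod_cast hn
  have hn1pos : 0 < n1 n := by exact_mod_cast (mul_pos hpmin hnR).trans_le hn1
  have hab : 0 ≤ b - a := sub_nonneg.2 ((hμ.2 0).1.trans (hμ.2 0).2)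
  set G := insert μ T
  calc P {ω | ε ≤ |distN x n (μh ω) μ|}
      ≤ P {ω | ones (Z n ω) = n1 n → ∃ g ∈ G, ε ^ 2 / 4
          ≤ |𝔼 i ∈ treated (Z n ω), (y i - g (x n i)) ^ 2 - 𝔼 i, (y i - g (x n i)) ^ 2|} :=
        measure_mono fun ω hω hones => by
          have hS : (treated (Z n ω)).Nonempty :=
            card_pos.1 (by rw [card_treated, hones]; exact hn1pos)
          have hratio : (n : ℝ) / #(treated (Z n ω)) ≤ pmin⁻¹ := by
            rw [card_treated, hones, div_le_iff₀ (by positivity), inv_mul_eq_div,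
              le_div_iff₀ hpmin]
            linarith
          obtain ⟨g, hgT, hg⟩ := hcover (μh ω) (hμh ω)
          have hclose := expect_sq_sub_le_of_isMinOn hy hS (hμh ω) hμ (hT hgT) (hfit ω) hμ_min hδ hg
          have hdist : ε ^ 2 ≤ distN x n (μh ω) μ ^ 2 :=
            pow_le_pow_left₀ hε.le (hω.trans_eq (abs_of_nonneg (Real.sqrt_nonneg _))) 2
          rw [distN_eq_sqrt_expect, Real.sq_sqrt (expect_nonneg fun _ _ => sq_nonneg _)] at hdist
          have hnet : 2 * (b - a) * (1 + n / #(treated (Z n ω))) * δ ≤ ε ^ 2 / 4 :=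
            (by gcongr : _ ≤ 2 * (b - a) * (1 + pmin⁻¹) * δ).trans hδε
          by_contra! hsmall
          linarith [hsmall g (mem_insert_of_mem hgT), hsmall μ (mem_insert_self _ _), pow_pos hε 2]
    _ ≤ ENNReal.ofReal (#G * ((b - a) ^ 2) ^ 2 / (n1 n * (ε ^ 2 / 4) ^ 2)) :=
        hCRD.measure_exists_le_abs_expect_sub_le hn hn1pos G _
          (fun g hg i => sq_sub_mem_Icc (hy i) (((mem_insert.1 hg).elim (· ▸ hμ) (hT ·)).2 _))
          (by positivity)
    _ ≤ ENNReal.ofReal ((#T + 1) * ((b - a) ^ 2) ^ 2 / (pmin * n * (ε ^ 2 / 4) ^ 2)) := by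
        have hcard : (#G : ℝ) ≤ #T + 1 := by exact_mod_cast Finset.card_insert_le μ T
        gcongr

theorem IsCRD.tendstoInProb_distN_isotonic (hCRD : IsCRD P Z n1) {pmin : ℝ} (hpmin : 0 < pmin)
    (hp : ∀ n : ℕ, 0 < n → pmin ≤ (n1 n : ℝ) / n) (x y : (n : ℕ) → Fin n → ℝ) {a b : ℝ}
    (hab : a ≤ b) (hy : ∀ n i, y n i ∈ Icc a b) (μh : (n : ℕ) → Ω → ℝ → ℝ)
    (hμh : ∀ n ω, μh n ω ∈ isotonicClass a b)
    (hfit : ∀ n ω, 0 < n1 n → IsMinOn (fun g => ∑ i ∈ treated (Z n ω), (y n i - g (x n i)) ^ 2)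
      (isotonicClass a b) (μh n ω)) :
    ∃ μs : (n : ℕ) → ℝ → ℝ, TendstoInProb P fun n ω => distN x n (μh n ω) (μs n) := by
  choose μs hμs hμs_min using fun n =>
    isotonicClass.exists_isMinOn hab (univ : Finset (Fin n)) (x n) (y n)
  refine ⟨μs, fun ε hε => ?_⟩
  obtain ⟨δ, hδ, hδε⟩ :=
    exists_pos_mul_lt (by positivity : 0 < ε ^ 2 / 4) (2 * (b - a) * (1 + pmin⁻¹))
  choose T hT hT_card hT_cover using fun n =>
    isotonicClass.exists_finset_expect_sq_le (x n) hab hδ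
  set C := (netCard (b - a) δ + 1) * ((b - a) ^ 2) ^ 2 / (pmin * (ε ^ 2 / 4) ^ 2)
  have hbound : ∀ n ≥ 1, P {ω | ε ≤ |distN x n (μh n ω) (μs n)|} ≤ ENNReal.ofReal (C / n) := by
    intro n hn
    have hnR : (0 : ℝ) < n := by exact_mod_cast hn
    have hn1 : pmin * n ≤ n1 n := (le_div_iff₀ hnR).1 (hp n hn)
    have hn1pos : 0 < n1 n := by exact_mod_cast (mul_pos hpmin hnR).trans_le hn1
    refine (hCRD.measure_le_distN_isotonic_le hn hpmin hn1 x (hy n) (hμh n)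
      (fun ω => hfit n ω hn1pos) (hμs n) (hμs_min n) (hT n) hδ.le (hT_cover n) hε hδε.le).trans
      (ENNReal.ofReal_le_ofReal ?_)
    have hcard : (#(T n) : ℝ) ≤ netCard (b - a) δ := by exact_mod_cast hT_card n
    calc (#(T n) + 1 : ℝ) * ((b - a) ^ 2) ^ 2 / (pmin * n * (ε ^ 2 / 4) ^ 2)
        ≤ (netCard (b - a) δ + 1) * ((b - a) ^ 2) ^ 2 / (pmin * n * (ε ^ 2 / 4) ^ 2) := by gcongr
      _ = C / n := by simp only [C]; field_simp
  have hlim : Tendsto (fun n : ℕ => ENNReal.ofReal (C / n)) atTop (𝓝 0) := by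
    simpa using ENNReal.tendsto_ofReal (tendsto_const_div_atTop_nhds_zero_nat C)
  exact tendsto_of_tendsto_of_tendsto_of_le_of_le' tendsto_const_nhds hlim
    (Eventually.of_forall fun _ => zero_le) (eventually_atTop.2 ⟨1, hbound⟩)

end Design

theorem isotonic_regression_satisfies_conditions_general
    {Ω : Type} [MeasurableSpace Ω] (P : Measure Ω) [IsProbabilityMeasure P]
    (Z : (n : ℕ) → Ω → Fin n → Bool) (n1 : ℕ → ℕ)
    (pmin pmax : ℝ) (hpmin : 0 < pmin)
    (hp : ∀ n : ℕ, 0 < n → pmin ≤ (n1 n : ℝ) / n ∧ (n1 n : ℝ) / n ≤ pmax)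
    (hCRD : IsCRD P Z n1)
    (x : (n : ℕ) → Fin n → ℝ) (y1 : (n : ℕ) → Fin n → ℝ)
    (a b : ℝ) (hab : a ≤ b)
    -- bounded outcomes
    (hy : ∀ n i, y1 n i ∈ Set.Icc a b)
    -- μ̂₁ₙ is an isotonic regression fit on the treated arm:
    -- a nondecreasing function into [a,b] minimizing the treated-arm squared error
    (μh1 : (n : ℕ) → Ω → ℝ → ℝ)
    (hmono : ∀ n ω, Monotone (μh1 n ω))
    (hrange : ∀ n ω s, μh1 n ω s ∈ Set.Icc a b)
    (hmin : ∀ n ω, ∀ μ : ℝ → ℝ, Monotone μ → (∀ s, μ s ∈ Set.Icc a b) →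
      (n1 n : ℝ)⁻¹ * ∑ i ∈ Finset.univ.filter (fun i => Z n ω i = true),
        (y1 n i - μh1 n ω (x n i)) ^ 2
      ≤ (n1 n : ℝ)⁻¹ * ∑ i ∈ Finset.univ.filter (fun i => Z n ω i = true),
        (y1 n i - μ (x n i)) ^ 2) :
    -- conclusions: prediction unbiasedness, stability, typically simple realizations
    (∀ n : ℕ, P {ω |
      (n1 n : ℝ)⁻¹ * ∑ i ∈ Finset.univ.filter (fun i => Z n ω i = true), μh1 n ω (x n i)
      = (n1 n : ℝ)⁻¹ * ∑ i ∈ Finset.univ.filter (fun i => Z n ω i = true), y1 n i} = 1) ∧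
    (∃ μs : (n : ℕ) → ℝ → ℝ,
      TendstoInProb P (fun n ω => distN x n (μh1 n ω) (μs n))) ∧
    (∃ F : (n : ℕ) → Set (ℝ → ℝ),
      Tendsto (fun n => P {ω | μh1 n ω ∈ F n}) atTop (nhds 1) ∧
      ∫⁻ s in Set.Ioc (0 : ℝ) 1,
        ⨆ n : ℕ, sqrtLog (coveringNumber (F n) (distN x n) s) ≠ ⊤) := by
  have hclass : ∀ n ω, μh1 n ω ∈ isotonicClass a b := fun n ω => ⟨hmono n ω, hrange n ω⟩
  have hfit : ∀ n ω, 0 < n1 n →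
      IsMinOn (fun g => ∑ i ∈ treated (Z n ω), (y1 n i - g (x n i)) ^ 2) (isotonicClass a b)
        (μh1 n ω) := fun n ω hn =>
    isMinOn_iff.2 fun g hg =>
      le_of_mul_le_mul_left (hmin n ω g hg.1 hg.2) (inv_pos.2 (Nat.cast_pos.2 hn))
  refine ⟨fun n => ?_, hCRD.tendstoInProb_distN_isotonic hpmin (fun n hn => (hp n hn).1) x y1
    hab hy μh1 hclass hfit, fun _ => isotonicClass a b, ?_,
    lintegral_iSup_sqrtLog_coveringNumber_isotonicClass_ne_top x hab⟩
  · convert measure_univ (μ := P)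
    refine Set.eq_univ_of_forall fun ω => ?_
    rcases (n1 n).eq_zero_or_pos with h | h
    · simp [h]
    · exact congrArg _
        (isotonicClass.sum_eq_of_isMinOn (fun i _ => hy n i) (hclass n ω) (hfit n ω h))
  · simp [hclass]

/-- **Theorem (Isotonic regression).**
With a real-valued covariate and outcomes in `[a,b]`, the isotonic regression fit on the
treated arm is prediction unbiased, stable, and has typically simple realizations. -/
theorem isotonic_regression_satisfies_conditions
    {Ω : Type} [MeasurableSpace Ω] (P : Measure Ω) [IsProbabilityMeasure P]
    (Z : (n : ℕ) → Ω → Fin n → Bool) (n1 : ℕ → ℕ)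
    (pmin pmax : ℝ) (hpmin : 0 < pmin) (hpmax : pmax < 1)
    (hp : ∀ n : ℕ, 0 < n → pmin ≤ (n1 n : ℝ) / n ∧ (n1 n : ℝ) / n ≤ pmax)
    (hCRD : IsCRD P Z n1)
    (x : (n : ℕ) → Fin n → ℝ) (y1 : (n : ℕ) → Fin n → ℝ)
    (a b : ℝ) (hab : a ≤ b)
    -- bounded outcomes
    (hy : ∀ n i, y1 n i ∈ Set.Icc a b)
    -- μ̂₁ₙ is an isotonic regression fit on the treated arm:
    -- a nondecreasing function into [a,b] minimizing the treated-arm squared error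
    (μh1 : (n : ℕ) → Ω → ℝ → ℝ)
    (hmono : ∀ n ω, Monotone (μh1 n ω))
    (hrange : ∀ n ω s, μh1 n ω s ∈ Set.Icc a b)
    (hmin : ∀ n ω, ∀ μ : ℝ → ℝ, Monotone μ → (∀ s, μ s ∈ Set.Icc a b) →
      (n1 n : ℝ)⁻¹ * ∑ i ∈ Finset.univ.filter (fun i => Z n ω i = true),
        (y1 n i - μh1 n ω (x n i)) ^ 2
      ≤ (n1 n : ℝ)⁻¹ * ∑ i ∈ Finset.univ.filter (fun i => Z n ω i = true),
        (y1 n i - μ (x n i)) ^ 2)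
    (hmeas : ∀ n i, Measurable (fun ω => μh1 n ω (x n i))) :
    -- conclusions: prediction unbiasedness, stability, typically simple realizations
    (∀ n : ℕ, P {ω |
      (n1 n : ℝ)⁻¹ * ∑ i ∈ Finset.univ.filter (fun i => Z n ω i = true), μh1 n ω (x n i)
      = (n1 n : ℝ)⁻¹ * ∑ i ∈ Finset.univ.filter (fun i => Z n ω i = true), y1 n i} = 1) ∧
    (∃ μs : (n : ℕ) → ℝ → ℝ,
      TendstoInProb P (fun n ω => distN x n (μh1 n ω) (μs n))) ∧
    (∃ F : (n : ℕ) → Set (ℝ → ℝ),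
      Tendsto (fun n => P {ω | μh1 n ω ∈ F n}) atTop (nhds 1) ∧
      ∫⁻ s in Set.Ioc (0 : ℝ) 1,
        ⨆ n : ℕ, sqrtLog (coveringNumber (F n) (distN x n) s) ≠ ⊤) :=
  isotonic_regression_satisfies_conditions_general P Z n1 pmin pmax hpmin hp hCRD x y1 a b hab hy
    μh1 hmono hrange hmin
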